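/- Sparsity-based control of empirical error, part 2 (Lemma 4.1(2)): For every ε > 0 there exists a constant K (depending only on ε) such that for all n, p, σ > 0, designs, targets β0 and Gaussian errors as in the context with κ̃(0) > 0 and s ≥ 1, the following event has probability at least 1 − ε: simultaneously for all integers 0 ≤ k ≤ s and all subsets T̃ ⊆ T with |T \ T̃| = k, | Q̂(β0_{T̃}) − Q̂(β0) − ‖β0_{T̃^c}‖_{2,n}² | ≤ K·σ·√( (log C(s,k) + k·log(e·μ(0)))/n )·‖β0_{T̃^c}‖_{2,n} + 2·c_s·‖β0_{T̃^c}‖_{2,n}, where C(s,k) is the binomial coefficient. -/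

import Mathlib

open Finset MeasureTheory ProbabilityTheory

noncomputable section

/-- Prediction norm `‖δ‖_{2,n} = ((1/n) ∑_i (x_i'δ)²)^{1/2}`. -/
def predNorm (n p : ℕ) (x : Fin n → Fin p → ℝ) (δ : Fin p → ℝ) : ℝ :=
  Real.sqrt ((n : ℝ)⁻¹ * ∑ i, (∑ j, x i j * δ j) ^ 2)

/-- Least-squares criterion `Q̂(β) = (1/n) ∑_i (y_i - x_i'β)²`. -/
def Qls (n p : ℕ) (x : Fin n → Fin p → ℝ) (y : Fin n → ℝ) (β : Fin p → ℝ) : ℝ :=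
  (n : ℝ)⁻¹ * ∑ i, (y i - ∑ j, x i j * β j) ^ 2

/-- ℓ1-norm on `ℝ^p`. -/
def l1 {p : ℕ} (v : Fin p → ℝ) : ℝ := ∑ j, |v j|

/-- sup-norm (max-absolute-coordinate norm) on `ℝ^p`. -/
def supNorm {p : ℕ} (v : Fin p → ℝ) : ℝ := ⨆ j, |v j|

/-- `restr A δ` is `δ` with coordinates outside `A` set to `0`. -/
def restr {p : ℕ} (A : Finset (Fin p)) (δ : Fin p → ℝ) : Fin p → ℝ :=
  fun j => if j ∈ A then δ j else 0

/-- Support of a vector, as a finset. -/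
def suppF {p : ℕ} (v : Fin p → ℝ) : Finset (Fin p) :=
  Finset.univ.filter (fun j => v j ≠ 0)

/-- Restricted eigenvalue `κ(c̄)`. -/
def kappaRE (n p : ℕ) (x : Fin n → Fin p → ℝ) (T : Finset (Fin p)) (cbar : ℝ) : ℝ :=
  sInf {r : ℝ | ∃ δ : Fin p → ℝ, δ ≠ 0 ∧ l1 (restr Tᶜ δ) ≤ cbar * l1 (restr T δ) ∧
    r = Real.sqrt T.card * predNorm n p x δ / l1 (restr T δ)}

/-- Restricted sparse maximal eigenvalue `φ(m)`. -/
def phiRSE (n p : ℕ) (x : Fin n → Fin p → ℝ) (T : Finset (Fin p)) (m : ℕ) : ℝ :=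
  sSup {r : ℝ | ∃ δ : Fin p → ℝ, δ ≠ 0 ∧ (suppF (restr Tᶜ δ)).card ≤ m ∧
    r = (predNorm n p x δ) ^ 2 / ∑ j, δ j ^ 2}

/-- Restricted sparse minimal eigenvalue `κ̃(m)²`. -/
def kappaTildeSq (n p : ℕ) (x : Fin n → Fin p → ℝ) (T : Finset (Fin p)) (m : ℕ) : ℝ :=
  sInf {r : ℝ | ∃ δ : Fin p → ℝ, δ ≠ 0 ∧ (suppF (restr Tᶜ δ)).card ≤ m ∧
    r = (predNorm n p x δ) ^ 2 / ∑ j, δ j ^ 2}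

/-- The condition number `μ(m) = √φ(m)/κ̃(m)`. -/
def muCond (n p : ℕ) (x : Fin n → Fin p → ℝ) (T : Finset (Fin p)) (m : ℕ) : ℝ :=
  Real.sqrt (phiRSE n p x T m) / Real.sqrt (kappaTildeSq n p x T m)

/-!
Write `δ = β0_{T̃ᶜ}`, which equals `β0_{T \ T̃}` because `T` is the support of `β0`. Expanding the
square, `Q̂(β0 - δ) - Q̂(β0) - ‖δ‖²_{2,n} = 2 E_n[(r_i + ε_i) x_i'δ]`. The approximation part is at
most `2 c_s ‖δ‖_{2,n}` by Cauchy–Schwarz. The noise part is a centred Gaussian linear form with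
variance `4σ²‖δ‖²_{2,n}/n`, so it exceeds `K σ √(L_k/n) ‖δ‖_{2,n}` with probability at most
`2 exp(-K² L_k / 8)`. Since `μ(0) ≥ 1`, `L_k ≥ log C(s,k) + k`; with `K² = 8c` a union bound over
the `C(s,k)` sets of each size `k ≥ 1` gives a total of at most `2 ∑_{k ≥ 1} e^{-ck} ≤ 4 e^{-c}`,
which is at most `ε` for `c = max 1 (log (4/ε))`.
-/

open scoped NNReal

lemma sum_powerset_erase_empty_inv_choose_mul {α : Type*} [DecidableEq α] (T : Finset α)
    (g : ℕ → ℝ) :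
    ∑ D ∈ T.powerset.erase ∅, ((#T).choose #D : ℝ)⁻¹ * g #D = ∑ k ∈ Ico 1 (#T + 1), g k := by
  rw [sum_erase_eq_sub (empty_mem_powerset T),
    sum_powerset_apply_card (fun k => ((#T).choose k : ℝ)⁻¹ * g k), range_eq_Ico,
    sum_eq_sum_Ico_succ_bot (Nat.succ_pos _)]
  have hchoose : ∀ k ∈ Ico 1 (#T + 1), (#T).choose k • (((#T).choose k : ℝ)⁻¹ * g k) = g k :=
    fun k hk => by
      rw [nsmul_eq_mul, ← mul_assoc, mul_inv_cancel₀ (by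
        exact_mod_cast (Nat.choose_pos (Nat.lt_succ_iff.mp (mem_Ico.mp hk).2)).ne'), one_mul]
  rw [sum_congr rfl hchoose]
  simp

lemma sum_Ico_one_pow_le_two_mul {q : ℝ} (hq0 : 0 ≤ q) (hq : q ≤ 1 / 2) (m : ℕ) :
    ∑ k ∈ Ico 1 m, q ^ k ≤ 2 * q := by
  calc ∑ k ∈ Ico 1 m, q ^ k ≤ q ^ 1 / (1 - q) := geom_sum_Ico_le_of_lt_one hq0 (by linarith)
    _ ≤ 2 * q := by rw [pow_one, div_le_iff₀ (by linarith)]; nlinarith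

section Gaussian

variable {Ω : Type*} {mΩ : MeasurableSpace Ω} {P : Measure Ω}

lemma hasSubgaussianMGF_of_map_eq_gaussianReal {X : Ω → ℝ} {v : ℝ≥0} (hX : AEMeasurable X P)
    (hmap : P.map X = gaussianReal 0 v) : HasSubgaussianMGF X v P := by
  rw [← HasSubgaussianMGF.id_map_iff hX, hmap]
  exact ⟨fun t => integrable_exp_mul_gaussianReal t, fun t => by simp [mgf_id_gaussianReal]⟩

lemma ProbabilityTheory.HasSubgaussianMGF.measureReal_le_abs_le [IsFiniteMeasure P] {X : Ω → ℝ}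
    {c : ℝ≥0} (h : HasSubgaussianMGF X c P) {t : ℝ} (ht : 0 ≤ t) :
    P.real {ω | t ≤ |X ω|} ≤ 2 * Real.exp (-t ^ 2 / (2 * c)) := by
  have hsplit : {ω | t ≤ |X ω|} ⊆ {ω | t ≤ X ω} ∪ {ω | t ≤ (-X) ω} :=
    fun ω (hω : t ≤ |X ω|) => le_abs.mp hω
  calc P.real {ω | t ≤ |X ω|} ≤ P.real {ω | t ≤ X ω} + P.real {ω | t ≤ (-X) ω} :=
        (measureReal_mono hsplit).trans (measureReal_union_le _ _)
    _ ≤ _ := by linarith [h.measure_ge_le ht, h.neg.measure_ge_le ht]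

variable {ι : Type*} [Fintype ι] {e : ι → Ω → ℝ} {σ : ℝ}

lemma hasSubgaussianMGF_sum_mul_of_gaussianReal (hmeas : ∀ i, Measurable (e i))
    (hind : iIndepFun e P) {v : ℝ≥0} (hmap : ∀ i, P.map (e i) = gaussianReal 0 v) (a : ι → ℝ) :
    HasSubgaussianMGF (fun ω => ∑ i, a i * e i ω) ((∑ i, a i ^ 2).toNNReal * v) P := by
  have hsum := HasSubgaussianMGF.sum_of_iIndepFun (s := univ)
    (hind.comp (fun i x => a i * x) fun i => measurable_const_mul (a i)) fun i _ =>
      (hasSubgaussianMGF_of_map_eq_gaussianReal (hmeas i).aemeasurable (hmap i)).const_mul (a i)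
  simp only [Function.comp_def] at hsum
  convert hsum using 1
  -- `const_mul` writes its parameter as a bare subtype, out of reach of `NNReal.coe_mul`
  exact NNReal.eq
    (by simp [sum_mul, Real.coe_toNNReal _ (sum_nonneg fun i _ => sq_nonneg (a i))]; rfl)

/-- The strict inequality makes the event empty when `a = 0`. -/
lemma measureReal_lt_abs_sum_mul_le (hσ : 0 < σ) (hmeas : ∀ i, Measurable (e i))
    (hind : iIndepFun e P) (hmap : ∀ i, P.map (e i) = gaussianReal 0 ⟨σ ^ 2, sq_nonneg σ⟩)
    (a : ι → ℝ) {r : ℝ} (hr : 0 ≤ r) :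
    P.real {ω | σ * √(2 * r) * √(∑ i, a i ^ 2) < |∑ i, a i * e i ω|} ≤ 2 * Real.exp (-r) := by
  have := hind.isProbabilityMeasure
  rcases (sum_nonneg fun i _ => sq_nonneg (a i)).eq_or_lt with h0 | hpos
  · have ha : ∀ i, a i = 0 := fun i => pow_eq_zero_iff two_ne_zero |>.mp
      ((sum_eq_zero_iff_of_nonneg fun i _ => sq_nonneg (a i)).mp h0.symm i (mem_univ i))
    simp [ha, Real.exp_nonneg]
  set t := σ * √(2 * r) * √(∑ i, a i ^ 2)
  have hparam : (((∑ i, a i ^ 2).toNNReal * ⟨σ ^ 2, sq_nonneg σ⟩ : ℝ≥0) : ℝ)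
      = (∑ i, a i ^ 2) * σ ^ 2 := by
    -- `⟨σ ^ 2, _⟩` elaborates at the bare subtype, out of reach of `NNReal.coe_mul`
    show ((∑ i, a i ^ 2).toNNReal : ℝ) * σ ^ 2 = _
    rw [Real.coe_toNNReal _ hpos.le]
  calc P.real {ω | t < |∑ i, a i * e i ω|} ≤ P.real {ω | t ≤ |∑ i, a i * e i ω|} :=
        measureReal_mono fun ω (hω : t < _) => hω.le
    _ ≤ _ := (hasSubgaussianMGF_sum_mul_of_gaussianReal hmeas hind hmap a).measureReal_le_abs_le
        (by positivity)
    _ = 2 * Real.exp (-r) := by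
        rw [hparam]
        simp only [t, mul_pow, Real.sq_sqrt hpos.le, Real.sq_sqrt (by positivity : (0:ℝ) ≤ 2 * r)]
        field_simp

lemma measureReal_exists_lt_abs_sum_mul_le (hσ : 0 < σ) (hmeas : ∀ i, Measurable (e i))
    (hind : iIndepFun e P) (hmap : ∀ i, P.map (e i) = gaussianReal 0 ⟨σ ^ 2, sq_nonneg σ⟩)
    {α : Type*} [DecidableEq α] (T : Finset α) (a : Finset α → ι → ℝ) (ha : a ∅ = 0)
    (r : Finset α → ℝ) {c : ℝ} (hc : 1 ≤ c)
    (hr : ∀ D ⊆ T, D.Nonempty → Real.log ((#T).choose #D) + c * #D ≤ r D) :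
    P.real {ω | ∃ D ∈ T.powerset, σ * √(2 * r D) * √(∑ i, a D i ^ 2) < |∑ i, a D i * e i ω|}
      ≤ 4 * Real.exp (-c) := by
  have := hind.isProbabilityMeasure
  set E := fun D => {ω | σ * √(2 * r D) * √(∑ i, a D i ^ 2) < |∑ i, a D i * e i ω|}
  have hE : {ω | ∃ D ∈ T.powerset, ω ∈ E D} ⊆ ⋃ D ∈ T.powerset.erase ∅, E D := by
    rintro ω ⟨D, hD, hω⟩
    have hne : D ≠ ∅ := by rintro rfl; simp [E, ha] at hω
    exact Set.mem_biUnion (mem_erase.mpr ⟨hne, hD⟩) hω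
  have hterm : ∀ D ∈ T.powerset.erase ∅,
      P.real (E D) ≤ 2 * (((#T).choose #D : ℝ)⁻¹ * Real.exp (-c) ^ #D) := by
    intro D hD
    obtain ⟨hne, hDT⟩ := mem_erase.mp hD
    have hchoose : (1 : ℝ) ≤ (#T).choose #D :=
      Nat.one_le_cast.mpr (Nat.choose_pos (card_le_card (mem_powerset.mp hDT)))
    have hrD := hr D (mem_powerset.mp hDT) (nonempty_iff_ne_empty.mpr hne)
    have hweight : ((#T).choose #D : ℝ)⁻¹ * Real.exp (-c) ^ #D
        = Real.exp (-(Real.log ((#T).choose #D) + c * #D)) := by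
      rw [neg_add, Real.exp_add, Real.exp_neg (Real.log _), Real.exp_log (by linarith),
        show -(c * #D) = #D * -c by ring, Real.exp_nat_mul]
    rw [hweight]
    refine (measureReal_lt_abs_sum_mul_le hσ hmeas hind hmap (a D) ?_).trans ?_
    · nlinarith [Real.log_nonneg hchoose]
    · gcongr
  have hq : Real.exp (-c) ≤ 1 / 2 :=
    (Real.exp_le_exp.mpr (by linarith)).trans Real.exp_neg_one_lt_half.le
  calc P.real {ω | ∃ D ∈ T.powerset, ω ∈ E D}
      ≤ ∑ D ∈ T.powerset.erase ∅, P.real (E D) :=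
        (measureReal_mono hE (measure_ne_top P _)).trans (measureReal_biUnion_finset_le _ _)
    _ ≤ ∑ D ∈ T.powerset.erase ∅, 2 * (((#T).choose #D : ℝ)⁻¹ * Real.exp (-c) ^ #D) :=
        sum_le_sum hterm
    _ = 2 * ∑ k ∈ Ico 1 (#T + 1), Real.exp (-c) ^ k := by
        rw [← mul_sum, sum_powerset_erase_empty_inv_choose_mul]
    _ ≤ 2 * (2 * Real.exp (-c)) := by
        gcongr
        exact sum_Ico_one_pow_le_two_mul (Real.exp_pos _).le hq _
    _ = 4 * Real.exp (-c) := by ring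

end Gaussian

lemma abs_inv_mul_sum_mul_le {n : ℕ} (r u : Fin n → ℝ) :
    |(n : ℝ)⁻¹ * ∑ i, r i * u i|
      ≤ √((n : ℝ)⁻¹ * ∑ i, r i ^ 2) * √((n : ℝ)⁻¹ * ∑ i, u i ^ 2) := by
  have hcs : |∑ i, r i * u i| ≤ √(∑ i, r i ^ 2) * √(∑ i, u i ^ 2) := by
    rw [← Real.sqrt_mul (sum_nonneg fun i _ => sq_nonneg (r i))]
    exact Real.abs_le_sqrt (sum_mul_sq_le_sq_mul_sq univ r u)
  rw [abs_mul, abs_of_nonneg (by positivity), Real.sqrt_mul (by positivity),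
    Real.sqrt_mul (by positivity)]
  calc (n : ℝ)⁻¹ * |∑ i, r i * u i|
      ≤ (√(n : ℝ)⁻¹ * √(n : ℝ)⁻¹) * (√(∑ i, r i ^ 2) * √(∑ i, u i ^ 2)) := by
        rw [Real.mul_self_sqrt (by positivity)]; gcongr
    _ = _ := by ring

lemma log_choose_add_mul_le {s k : ℕ} (hk : k ≤ s) {c μ : ℝ} (hc : 1 ≤ c) (hμ : 1 ≤ μ) :
    Real.log (s.choose k) + c * k
      ≤ c * (Real.log (s.choose k) + k * Real.log (Real.exp 1 * μ)) := by
  have hlogC : 0 ≤ Real.log (s.choose k) :=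
    Real.log_nonneg (Nat.one_le_cast.mpr (Nat.choose_pos hk))
  have hlogμ : 1 ≤ Real.log (Real.exp 1 * μ) := by
    rw [Real.log_mul (Real.exp_ne_zero 1) (by positivity), Real.log_exp]
    linarith [Real.log_nonneg hμ]
  have hk0 : (0 : ℝ) ≤ k := Nat.cast_nonneg k
  nlinarith [mul_le_mul_of_nonneg_left hlogμ hk0]

lemma ofReal_one_sub_le_of_measureReal_le {Ω : Type*} [MeasurableSpace Ω] {P : Measure Ω}
    [IsProbabilityMeasure P] {s t : Set Ω} {ε : ℝ} (hs : P.real s ≤ ε) (hst : sᶜ ⊆ t) :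
    ENNReal.ofReal (1 - ε) ≤ P t := by
  have hcover : P.real Set.univ ≤ P.real t + P.real s :=
    (measureReal_mono fun ω _ => (em (ω ∈ s)).elim Or.inr fun h => Or.inl (hst h)).trans
      (measureReal_union_le t s)
  rw [probReal_univ] at hcover
  rw [← ofReal_measureReal]
  exact ENNReal.ofReal_le_ofReal (by linarith)

lemma four_mul_exp_neg_max_le {ε : ℝ} (hε : 0 < ε) :
    4 * Real.exp (-max 1 (Real.log (4 / ε))) ≤ ε := by
  calc 4 * Real.exp (-max 1 (Real.log (4 / ε))) ≤ 4 * Real.exp (-Real.log (4 / ε)) := by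
        gcongr; exact le_max_right _ _
    _ = ε := by rw [Real.exp_neg, Real.exp_log (by positivity)]; field_simp

section Regression

variable {n p : ℕ} (x : Fin n → Fin p → ℝ)

lemma restr_add_restr_compl (A : Finset (Fin p)) (β : Fin p → ℝ) :
    restr A β + restr Aᶜ β = β := by
  ext j
  by_cases hj : j ∈ A <;> simp [restr, hj]

lemma restr_compl_eq_restr_sdiff {β : Fin p → ℝ} {T : Finset (Fin p)} (hβ : suppF β ⊆ T)
    (A : Finset (Fin p)) : restr Aᶜ β = restr (T \ A) β := by
  ext j
  by_cases hjT : j ∈ T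
  · simp [restr, hjT]
  · have hβj : β j = 0 := by
      by_contra h
      exact hjT (hβ (mem_filter.mpr ⟨mem_univ j, h⟩))
    simp [restr, hjT, hβj]

lemma predNorm_sq (δ : Fin p → ℝ) :
    predNorm n p x δ ^ 2 = (n : ℝ)⁻¹ * ∑ i, (∑ j, x i j * δ j) ^ 2 :=
  Real.sq_sqrt (by positivity)

lemma Qls_sub_sub_predNorm_sq (y : Fin n → ℝ) (β δ : Fin p → ℝ) :
    Qls n p x y (β - δ) - Qls n p x y β - predNorm n p x δ ^ 2
      = 2 * (n : ℝ)⁻¹ * ∑ i, (y i - ∑ j, x i j * β j) * ∑ j, x i j * δ j := by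
  have hlin : ∀ i, ∑ j, x i j * (β - δ) j = ∑ j, x i j * β j - ∑ j, x i j * δ j := fun i => by
    simp only [Pi.sub_apply, mul_sub, sum_sub_distrib]
  have hsum : ∑ i, (y i - (∑ j, x i j * β j - ∑ j, x i j * δ j)) ^ 2
      - ∑ i, (y i - ∑ j, x i j * β j) ^ 2 - ∑ i, (∑ j, x i j * δ j) ^ 2
      = 2 * ∑ i, (y i - ∑ j, x i j * β j) * ∑ j, x i j * δ j := by
    rw [mul_sum, ← sum_sub_distrib, ← sum_sub_distrib]
    exact sum_congr rfl fun i _ => by ring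
  simp only [Qls, predNorm_sq, hlin]
  linear_combination (n : ℝ)⁻¹ * hsum

lemma sqrt_sum_sq_two_mul_inv_mul (δ : Fin p → ℝ) :
    √(∑ i, (2 * (n : ℝ)⁻¹ * ∑ j, x i j * δ j) ^ 2) = 2 / √n * predNorm n p x δ := by
  rw [predNorm, Real.sqrt_mul (by positivity), Real.sqrt_inv]
  simp_rw [mul_pow, ← mul_sum]
  rw [Real.sqrt_mul (by positivity), Real.sqrt_mul (by positivity), Real.sqrt_sq (by norm_num),
    Real.sqrt_sq (by positivity)]
  rcases (Nat.cast_nonneg n : (0:ℝ) ≤ n).eq_or_lt with h | h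
  · simp [← h]
  · field_simp
    rw [Real.sq_sqrt h.le]
    ring

lemma abs_Qls_restr_sub_le (f ε : Fin n → ℝ) (β : Fin p → ℝ) (A : Finset (Fin p)) :
    |Qls n p x (fun i => f i + ε i) (restr A β) - Qls n p x (fun i => f i + ε i) β
        - predNorm n p x (restr Aᶜ β) ^ 2|
      ≤ |∑ i, (2 * (n : ℝ)⁻¹ * ∑ j, x i j * restr Aᶜ β j) * ε i|
        + 2 * √((n : ℝ)⁻¹ * ∑ i, (f i - ∑ j, x i j * β j) ^ 2) * predNorm n p x (restr Aᶜ β) := by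
  set u := fun i => ∑ j, x i j * restr Aᶜ β j
  have hsplit : 2 * (n : ℝ)⁻¹ * ∑ i, (f i + ε i - ∑ j, x i j * β j) * u i
      = ∑ i, (2 * (n : ℝ)⁻¹ * u i) * ε i
        + 2 * ((n : ℝ)⁻¹ * ∑ i, (f i - ∑ j, x i j * β j) * u i) := by
    simp only [mul_sum, ← sum_add_distrib]
    exact sum_congr rfl fun i _ => by ring
  have hcs := abs_inv_mul_sum_mul_le (fun i => f i - ∑ j, x i j * β j) u
  rw [eq_sub_of_add_eq (restr_add_restr_compl A β), Qls_sub_sub_predNorm_sq, hsplit]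
  calc _ ≤ |∑ i, (2 * (n : ℝ)⁻¹ * u i) * ε i|
        + 2 * |(n : ℝ)⁻¹ * ∑ i, (f i - ∑ j, x i j * β j) * u i| := by
        rw [← abs_two, ← abs_mul, abs_two]; exact abs_add_le _ _
    _ ≤ |∑ i, (2 * (n : ℝ)⁻¹ * u i) * ε i|
        + 2 * (√((n : ℝ)⁻¹ * ∑ i, (f i - ∑ j, x i j * β j) ^ 2) * predNorm n p x (restr Aᶜ β)) := by
        gcongr; exact hcs
    _ = _ := by ring

lemma predNorm_sq_le (δ : Fin p → ℝ) :
    predNorm n p x δ ^ 2 ≤ ((n : ℝ)⁻¹ * ∑ i, ∑ j, x i j ^ 2) * ∑ j, δ j ^ 2 := by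
  rw [predNorm_sq, mul_assoc, sum_mul]
  gcongr with i
  exact sum_mul_sq_le_sq_mul_sq univ (x i) δ

lemma kappaTildeSq_le_phiRSE {T : Finset (Fin p)} (hT : T.Nonempty) (m : ℕ) :
    kappaTildeSq n p x T m ≤ phiRSE n p x T m := by
  obtain ⟨j₀, hj₀⟩ := hT
  set S := {r : ℝ | ∃ δ : Fin p → ℝ, δ ≠ 0 ∧ (suppF (restr Tᶜ δ)).card ≤ m ∧
    r = (predNorm n p x δ) ^ 2 / ∑ j, δ j ^ 2}
  have hsingle : restr Tᶜ (Pi.single j₀ 1) = 0 := by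
    ext j
    by_cases hj : j = j₀ <;> simp [restr, hj, hj₀]
  have hmem : _ ∈ S := ⟨Pi.single j₀ 1, by simp, by simp [hsingle, suppF], rfl⟩
  have hbelow : BddBelow S := ⟨0, by rintro _ ⟨δ, -, -, rfl⟩; positivity⟩
  have habove : BddAbove S := ⟨(n : ℝ)⁻¹ * ∑ i, ∑ j, x i j ^ 2, by
    rintro _ ⟨δ, -, -, rfl⟩
    exact div_le_of_le_mul₀ (by positivity) (by positivity) (predNorm_sq_le x δ)⟩
  exact (csInf_le hbelow hmem).trans (le_csSup habove hmem)

lemma one_le_muCond {T : Finset (Fin p)} (hT : T.Nonempty) {m : ℕ}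
    (hκ : 0 < kappaTildeSq n p x T m) : 1 ≤ muCond n p x T m := by
  rw [muCond, le_div_iff₀ (Real.sqrt_pos.mpr hκ), one_mul]
  exact Real.sqrt_le_sqrt (kappaTildeSq_le_phiRSE x hT m)

end Regression

/-- Lemma 4.1(2): sparsity-based control of the empirical error for
truncations of the oracle target. -/
theorem sparsity_control_empirical_error_part2
    (ε : ℝ) (hε : 0 < ε) :
    ∃ K : ℝ,
      ∀ (n p : ℕ), 0 < n → 0 < p →
      ∀ (x : Fin n → Fin p → ℝ), (∀ j, (n : ℝ)⁻¹ * ∑ i, x i j ^ 2 = 1) →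
      ∀ (σ : ℝ), 0 < σ →
      ∀ (f : Fin n → ℝ) (β0 : Fin p → ℝ) (T : Finset (Fin p)), T = suppF β0 →
      ∀ s : ℕ, s = T.card → 1 ≤ s →
      0 < kappaTildeSq n p x T 0 →
      ∀ cs : ℝ, cs = Real.sqrt ((n : ℝ)⁻¹ * ∑ i, (f i - ∑ j, x i j * β0 j) ^ 2) →
      ∀ (Ω : Type) (mΩ : MeasurableSpace Ω) (P : Measure Ω), IsProbabilityMeasure P →
      ∀ (e : Fin n → Ω → ℝ), (∀ i, Measurable (e i)) →
      iIndepFun e P →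
      (∀ i, Measure.map (e i) P = gaussianReal 0 ⟨σ ^ 2, sq_nonneg σ⟩) →
      P {ω | ∀ k : ℕ, k ≤ s → ∀ Ttil : Finset (Fin p), Ttil ⊆ T → (T \ Ttil).card = k →
            |Qls n p x (fun i => f i + e i ω) (restr Ttil β0) -
                Qls n p x (fun i => f i + e i ω) β0 -
                predNorm n p x (restr Ttilᶜ β0) ^ 2| ≤
              K * σ * Real.sqrt ((Real.log (Nat.choose s k) +
                  k * Real.log (Real.exp 1 * muCond n p x T 0)) / n) *
                predNorm n p x (restr Ttilᶜ β0) +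
                2 * cs * predNorm n p x (restr Ttilᶜ β0)} ≥
        ENNReal.ofReal (1 - ε) := by
  set c := max 1 (Real.log (4 / ε))
  refine ⟨2 * √(2 * c), fun n p _ _ x _ σ hσ f β0 T hT s hs hs1 hκ cs hcs Ω _ P _ e hmeas hind
    hmap => ?_⟩
  subst hs hcs
  set L : ℕ → ℝ := fun k => Real.log ((#T).choose k) + k * Real.log (Real.exp 1 * muCond n p x T 0)
  set a : Finset (Fin p) → Fin n → ℝ := fun D i => 2 * (n : ℝ)⁻¹ * ∑ j, x i j * restr D β0 j
  have hbad := measureReal_exists_lt_abs_sum_mul_le hσ hmeas hind hmap T a (by ext; simp [a, restr])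
    (fun D => c * L #D) (le_max_left _ _) fun D hD _ =>
      log_choose_add_mul_le (card_le_card hD) (le_max_left _ _)
        (one_le_muCond x (card_pos.mp hs1) hκ)
  refine ofReal_one_sub_le_of_measureReal_le (hbad.trans (four_mul_exp_neg_max_le hε)) ?_
  intro ω hω k _ Ttil _ hk
  simp only [Set.mem_compl_iff, Set.mem_ofPred_eq, not_exists, not_and, not_lt] at hω
  have hD := hω (T \ Ttil) (mem_powerset.mpr sdiff_subset)
  rw [sqrt_sum_sq_two_mul_inv_mul, hk] at hD
  refine (abs_Qls_restr_sub_le x f (e · ω) β0 Ttil).trans ?_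
  rw [restr_compl_eq_restr_sdiff hT.ge]
  have hthr : σ * √(2 * (c * L k)) * (2 / √n * predNorm n p x (restr (T \ Ttil) β0))
      = 2 * √(2 * c) * σ * √(L k / n) * predNorm n p x (restr (T \ Ttil) β0) := by
    rw [← mul_assoc 2 c, Real.sqrt_mul (by positivity : (0 : ℝ) ≤ 2 * c),
      Real.sqrt_div' _ (Nat.cast_nonneg n)]
    ring
  linarith
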